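/- Fix a Tanner graph and erased set E, and let U_PPD(ℓ) denote the unresolved variable nodes after ℓ iterations of parallel peeling and U_seq the unresolved set upon termination of any sequential peeling execution. Then the sequence U_PPD(ℓ) is non-increasing (in set inclusion), stabilizes after finitely many iterations, and its limit equals U_seq: parallel and sequential peeling yield the same final decoding result. -/
import Mathlib


variable {V C : Type*} [DecidableEq V]

/-- Residual degree of a check node `c` with respect to the unresolved set `U`. -/
def resDeg (N : C → Finset V) (U : Finset V) (c : C) : ℕ := ((N c).filter (· ∈ U)).card

/-- One step of sequential peeling: some check node has residual degree `1`, and its unique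
unresolved neighbor is resolved (removed). -/
def PeelStep (N : C → Finset V) (U U' : Finset V) : Prop :=
  ∃ c : C, ∃ v : V, v ∈ U ∧ v ∈ N c ∧ resDeg N U c = 1 ∧ U' = U.erase v

open Classical in
/-- Unresolved variable nodes of the parallel peeling decoder after `ℓ` iterations: all
variable nodes attached to a degree-1 check are resolved simultaneously in each iteration. -/
noncomputable def ppd (N : C → Finset V) (E : Finset V) : ℕ → Finset V
  | 0 => E
  | ℓ + 1 => (ppd N E ℓ).filter (fun v => ¬ ∃ c : C, N c ∩ ppd N E ℓ = {v})

lemma resDeg_eq (N : C → Finset V) (U : Finset V) (c : C) :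
    resDeg N U c = (N c ∩ U).card := by
  rw [resDeg, Finset.filter_mem_eq_inter]

/-- Stopping set predicate. -/
def Stop (N : C → Finset V) (S : Finset V) : Prop := ∀ c : C, (N c ∩ S).card ≠ 1

lemma stop_subset_peel {N : C → Finset V} {S U U' : Finset V}
    (hS : Stop N S) (hSU : S ⊆ U) (h : PeelStep N U U') : S ⊆ U' := by
  obtain ⟨c, v, hvU, hvN, hdeg, rfl⟩ := h
  intro x hx
  rw [Finset.mem_erase]
  refine ⟨?_, hSU hx⟩
  rintro rfl
  have h1 : N c ∩ U = {x} := by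
    rw [resDeg_eq] at hdeg
    have hxin : x ∈ N c ∩ U := Finset.mem_inter.2 ⟨hvN, hvU⟩
    exact Finset.eq_singleton_iff_unique_mem.2 ⟨hxin, fun y hy => Finset.card_le_one.1 hdeg.le y hy x hxin⟩
  have : N c ∩ S = {x} := by
    apply Finset.Subset.antisymm
    · intro y hy
      rw [← h1]
      exact Finset.mem_inter.2 ⟨(Finset.mem_inter.1 hy).1, hSU (Finset.mem_inter.1 hy).2⟩
    · intro y hy
      rw [Finset.mem_singleton] at hy
      subst hy
      exact Finset.mem_inter.2 ⟨hvN, hx⟩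
  exact hS c (by rw [this, Finset.card_singleton])

lemma stop_subset_ppd {N : C → Finset V} {S E : Finset V}
    (hS : Stop N S) (hSE : S ⊆ E) : ∀ ℓ, S ⊆ ppd N E ℓ := by
  classical
  intro ℓ
  induction ℓ with
  | zero => exact hSE
  | succ ℓ ih =>
    intro x hx
    rw [ppd, Finset.mem_filter]
    refine ⟨ih hx, ?_⟩
    rintro ⟨c, hc⟩
    have : N c ∩ S = {x} := by
      apply Finset.Subset.antisymm
      · intro y hy
        rw [← hc]
        exact Finset.mem_inter.2 ⟨(Finset.mem_inter.1 hy).1, ih (Finset.mem_inter.1 hy).2⟩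
      · intro y hy
        rw [Finset.mem_singleton] at hy
        rw [hy]
        have hx' : x ∈ N c ∩ ppd N E ℓ := by
          rw [hc]; exact Finset.mem_singleton_self x
        exact Finset.mem_inter.2 ⟨(Finset.mem_inter.1 hx').1, hx⟩
    exact hS c (by rw [this, Finset.card_singleton])

lemma seq_subset {N : C → Finset V} {E U : Finset V}
    (h : Relation.ReflTransGen (PeelStep N) E U) : U ⊆ E := by
  induction h with
  | refl => exact Finset.Subset.refl _
  | tail _ hstep ih =>
    obtain ⟨c, v, _, _, _, rfl⟩ := hstep
    exact (Finset.erase_subset _ _).trans ih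

lemma stop_subset_seq {N : C → Finset V} {S E U : Finset V}
    (hS : Stop N S) (hSE : S ⊆ E)
    (h : Relation.ReflTransGen (PeelStep N) E U) : S ⊆ U := by
  induction h with
  | refl => exact hSE
  | tail _ hstep ih => exact stop_subset_peel hS ih hstep

/-- The PPD unresolved sets `U_PPD(ℓ)` form a non-increasing (under inclusion) sequence that
stabilizes after finitely many iterations, and the stable limit equals the unresolved set
`U_seq` at termination of any execution of sequential peeling: parallel and sequential
peeling yield the same final decoding result. -/
theorem ppd_eq_sequential_final [Fintype V]
    (N : C → Finset V) (E : Finset V) :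
    (∀ ℓ : ℕ, ppd N E (ℓ + 1) ⊆ ppd N E ℓ) ∧
    ∃ L0 : ℕ, (∀ ℓ : ℕ, L0 ≤ ℓ → ppd N E ℓ = ppd N E L0) ∧
      ∀ Useq : Finset V,
        Relation.ReflTransGen (PeelStep N) E Useq →
        (∀ c : C, resDeg N Useq c ≠ 1) →
        ppd N E L0 = Useq := by
  classical
  have mono : ∀ ℓ : ℕ, ppd N E (ℓ + 1) ⊆ ppd N E ℓ := by
    intro ℓ
    rw [ppd]
    exact Finset.filter_subset _ _
  refine ⟨mono, ?_⟩
  -- find a fixed point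
  have hfix : ∃ m : ℕ, ppd N E (m + 1) = ppd N E m := by
    by_contra hc
    push_neg at hc
    have hlt : ∀ m, (ppd N E (m + 1)).card < (ppd N E m).card := fun m =>
      Finset.card_lt_card (lt_of_le_of_ne (mono m) (hc m))
    have hle : ∀ n, (ppd N E n).card + n ≤ E.card := by
      intro n
      induction n with
      | zero => simp [ppd]
      | succ n ih =>
        have := hlt n
        omega
    have := hle (E.card + 1)
    omega
  obtain ⟨L0, hL0⟩ := hfix
  have hstab : ∀ ℓ : ℕ, L0 ≤ ℓ → ppd N E ℓ = ppd N E L0 := by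
    intro ℓ hℓ
    induction ℓ with
    | zero => rw [Nat.le_zero.1 hℓ]
    | succ ℓ ih =>
      rcases Nat.lt_or_ge L0 (ℓ + 1) with h | h
      · have hl : L0 ≤ ℓ := Nat.lt_succ_iff.1 h
        have := ih hl
        rw [ppd, this, ← ppd, hL0]
      · rw [Nat.le_antisymm hℓ h]
  refine ⟨L0, hstab, ?_⟩
  intro Useq hseq hdeg
  have hUstop : Stop N Useq := by
    intro c
    rw [← resDeg_eq]; exact hdeg c
  have hLstop : Stop N (ppd N E L0) := by
    intro c hc
    obtain ⟨v, hv⟩ := Finset.card_eq_one.1 hc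
    have hvmem : v ∈ ppd N E L0 :=
      (Finset.mem_inter.1 (hv ▸ Finset.mem_singleton_self v)).2
    have : v ∈ ppd N E (L0 + 1) := by rw [hstab (L0+1) (Nat.le_succ _)]; exact hvmem
    rw [ppd, Finset.mem_filter] at this
    exact this.2 ⟨c, hv⟩
  have hLE : ppd N E L0 ⊆ E := by
    have : ∀ ℓ, ppd N E ℓ ⊆ E := by
      intro ℓ; induction ℓ with
      | zero => exact Finset.Subset.refl _
      | succ ℓ ih => exact (mono ℓ).trans ih
    exact this L0
  apply Finset.Subset.antisymm
  · exact stop_subset_seq hLstop hLE hseq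
  · exact stop_subset_ppd hUstop (seq_subset hseq) L0
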